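/- Fix a segment t ∈ {1,…,σ} of a uniform RIV model with segment probability p_t, a finite candidate set C_t ⊂ (t, t+1), an integer k ≥ 1, and set k_t = ⌊p_t k⌋; assume |C_t| ≥ k_t and let Ŵ_t be the greedy committee for segment t. Then for every c ∈ C_t ∖ Ŵ_t and all integers 1 ≤ ℓ ≤ k and 0 ≤ j ≤ ℓ−1, it holds that π(ℓ, c, j) ≤ ℓ/k − 1/(4k). -/

import Mathlib

open MeasureTheory

/-- The distribution of the pair of endpoints `(X, Y)` of a random voter in the uniform
RIV model with `σ` segments and segment probabilities `p 1, …, p σ`: the mixture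
`∑ t, p t • (U_{[t,t+1]} ⊗ U_{[t,t+1]})` where `U_I` is the uniform measure on `I`. -/
noncomputable def rivMeasure (σ : ℕ) (p : ℕ → ℝ) : Measure (ℝ × ℝ) :=
  ∑ t ∈ Finset.Icc 1 σ,
    ENNReal.ofReal (p t) •
      ((volume.restrict (Set.Icc (t : ℝ) (t + 1))).prod
        (volume.restrict (Set.Icc (t : ℝ) (t + 1))))

/-- The `ξ`-th marked point of segment `t`: `t + (2ξ−1)/(2(k_t+2))`. -/
noncomputable def markedPoint (t kt : ℕ) (ξ : ℕ) : ℝ :=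
  (t : ℝ) + (2 * (ξ : ℝ) - 1) / (2 * ((kt : ℝ) + 2))

/-- `w 2, …, w (kt+1)` is a greedy committee for segment `t` with candidate set `Ct`:
for each `ξ = 2, …, kt+1`, `w ξ` is a candidate not chosen before that is closest to
the marked point `m_ξ` among all not-yet-chosen candidates. -/
def IsGreedyCommittee (t kt : ℕ) (Ct : Finset ℝ) (w : ℕ → ℝ) : Prop :=
  ∀ ξ ∈ Finset.Icc 2 (kt + 1),
    w ξ ∈ Ct ∧ w ξ ∉ (Finset.Icc 2 (ξ - 1)).image w ∧
      ∀ c' ∈ Ct, c' ∉ (Finset.Icc 2 (ξ - 1)).image w →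
        |w ξ - markedPoint t kt ξ| ≤ |c' - markedPoint t kt ξ|

/-- `rank W c = ρ(c)`: the number of points of `W` strictly to the left of `c`. -/
noncomputable def rank (W : Finset ℝ) (c : ℝ) : ℕ :=
  (W.filter (fun x => x < c)).card

/-- `dPlus t kt W c r = d⁺_r(c)`: the distance from `c` to the `(r+1)`-th element of `W`
to the right of `c` (elements of `W` listed in increasing order), or to the right
endpoint `t+1` of the segment if no such element exists. -/
noncomputable def dPlus (t kt : ℕ) (W : Finset ℝ) (c : ℝ) (r : ℕ) : ℝ :=
  if rank W c + r < kt then (W.sort (· ≤ ·)).getD (rank W c + r) 0 - c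
  else ((t : ℝ) + 1) - c

/-- `dMinus t W c r = d⁻_r(c)`: the distance from `c` to the `(r+1)`-th element of `W`
to the left of `c`, or to the left endpoint `t` of the segment if no such element exists. -/
noncomputable def dMinus (t : ℕ) (W : Finset ℝ) (c : ℝ) (r : ℕ) : ℝ :=
  if r + 1 ≤ rank W c then c - (W.sort (· ≤ ·)).getD (rank W c - r - 1) 0
  else c - (t : ℝ)

/-- The event that a voter with endpoint pair `xy` approves `c`, approves at most `r₁`
elements of `W` strictly to the left of `c`, and at most `r₂` elements of `W` strictly
to the right of `c` (the voter's approval interval is `[min xy, max xy]`). -/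
def approvalEvent (W : Finset ℝ) (c : ℝ) (r₁ r₂ : ℕ) : Set (ℝ × ℝ) :=
  {xy | (min xy.1 xy.2 ≤ c ∧ c ≤ max xy.1 xy.2) ∧
    (W.filter (fun x => x < c ∧ min xy.1 xy.2 ≤ x ∧ x ≤ max xy.1 xy.2)).card ≤ r₁ ∧
    (W.filter (fun x => c < x ∧ min xy.1 xy.2 ≤ x ∧ x ≤ max xy.1 xy.2)).card ≤ r₂}

/-- `segmentMiddle t kt Ct = K_t`: the candidates of `C_t` lying in
`(t + 3/(2(k_t+2)), t + 1 − 3/(2(k_t+2)))`. -/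
noncomputable def segmentMiddle (t kt : ℕ) (Ct : Finset ℝ) : Finset ℝ :=
  Ct.filter (fun x =>
    (t : ℝ) + 3 / (2 * ((kt : ℝ) + 2)) < x ∧ x < (t : ℝ) + 1 - 3 / (2 * ((kt : ℝ) + 2)))

/-! Only segment `t` can produce an approval interval `[min(X,Y), max(X,Y)]` containing `c`,
and there the event forces that interval into `[c - d⁻_j(c), c + d⁺_r(c)]` with
`r = ℓ - 1 - j`, so `π(ℓ, c, j) ≤ p_t · 2 d⁻ d⁺`. Since `c` was never picked, each greedy
member `w_ξ` lies on the same side of `c` as its marked point `m_ξ`, no farther away than the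
reflection `2 m_ξ - c`. Hence the `j + 1` members just left of `c` give `d⁻ ≤ 2 (c - m_a)` and
the `r + 1` just right of it give `d⁺ ≤ 2 (m_b - c)`, where `m_b - m_a = ℓ / (k_t + 2)`; when a
side runs out of members the segment end takes over. AM-GM yields
`2 d⁻ d⁺ ≤ (8ℓ² + 1) / (2 (k_t + 2))²`, and `p_t k < k_t + 1` turns this into
`ℓ/k - 1/(4k)`. -/

open Finset

namespace Finset

variable {α : Type*} [LinearOrder α] (W : Finset α) {i : ℕ} (d : α)

theorem sort_getD_mem (hi : i < #W) : W.sort.getD i d ∈ W := by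
  rw [List.getD_eq_getElem _ _ (by simpa using hi)]; exact (mem_sort _).1 (List.getElem_mem _)

theorem card_filter_lt_sort_getD (hi : i < #W) : #{x ∈ W | x < W.sort.getD i d} = i := by
  set f := W.orderEmbOfFin rfl
  have hf : W.sort.getD i d = f ⟨i, hi⟩ := by
    rw [List.getD_eq_getElem _ _ (by simpa using hi), orderEmbOfFin_apply]; rfl
  have hfilter : {x ∈ W | x < f ⟨i, hi⟩} = (Iio ⟨i, hi⟩).map f.toEmbedding := by
    ext x
    simp only [mem_filter, mem_map, mem_Iio, RelEmbedding.coe_toEmbedding]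
    constructor
    · rintro ⟨hx, hlt⟩
      obtain ⟨j, rfl⟩ : x ∈ Set.range f := by rwa [range_orderEmbOfFin]
      exact ⟨j, f.lt_iff_lt.1 hlt, rfl⟩
    · rintro ⟨j, hj, rfl⟩
      exact ⟨orderEmbOfFin_mem W rfl j, f.lt_iff_lt.2 hj⟩
  rw [hf, hfilter, card_map, Fin.card_Iio]

theorem card_filter_le_sort_getD (hi : i < #W) : #{x ∈ W | x ≤ W.sort.getD i d} = i + 1 := by
  set a := W.sort.getD i d
  have : {x ∈ W | x ≤ a} = insert a {x ∈ W | x < a} := by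
    ext x
    simp only [mem_filter, mem_insert, le_iff_lt_or_eq]
    constructor
    · rintro ⟨hx, hlt | rfl⟩ <;> simp_all
    · rintro (rfl | ⟨hx, hlt⟩)
      · exact ⟨sort_getD_mem W d hi, Or.inr rfl⟩
      · exact ⟨hx, Or.inl hlt⟩
  rw [this, card_insert_of_notMem (by simp), card_filter_lt_sort_getD W d hi]

theorem sort_getD_lt_iff (hi : i < #W) {L : α} :
    W.sort.getD i d < L ↔ i < #{x ∈ W | x < L} := by
  constructor
  · intro h
    calc i < #{x ∈ W | x ≤ W.sort.getD i d} := by rw [card_filter_le_sort_getD W d hi]; omega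
      _ ≤ #{x ∈ W | x < L} := card_le_card (monotone_filter_right _ fun _ _ hx => hx.trans_lt h)
  · intro h
    by_contra! hL
    have := card_le_card (monotone_filter_right W fun x _ (hx : x < L) => hx.trans_le hL)
    rw [card_filter_lt_sort_getD W d hi] at this
    omega

theorem sort_getD_le_iff (hi : i < #W) {U : α} :
    W.sort.getD i d ≤ U ↔ i < #{x ∈ W | x ≤ U} := by
  constructor
  · intro h
    calc i < #{x ∈ W | x ≤ W.sort.getD i d} := by rw [card_filter_le_sort_getD W d hi]; omega
      _ ≤ #{x ∈ W | x ≤ U} := card_le_card (monotone_filter_right _ fun _ _ hx => hx.trans h)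
  · intro h
    by_contra! hU
    have := card_le_card (monotone_filter_right W fun x _ (hx : x ≤ U) => hx.trans_lt hU)
    rw [card_filter_lt_sort_getD W d hi] at this
    omega

end Finset

section Distances

variable {W : Finset ℝ} {t : ℕ} {c a b : ℝ} {j r : ℕ}

theorem rank_le_finset_card : rank W c ≤ #W := card_filter_le _ _

theorem sort_getD_lt_of_lt_rank {i : ℕ} (hi : i < rank W c) : W.sort.getD i 0 < c :=
  (W.sort_getD_lt_iff 0 (hi.trans_le rank_le_finset_card)).2 hi

theorem dMinus_nonneg (htc : (t : ℝ) ≤ c) : 0 ≤ dMinus t W c j := by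
  unfold dMinus
  split_ifs with h
  · linarith [sort_getD_lt_of_lt_rank (W := W) (c := c) (i := rank W c - j - 1) (by omega)]
  · linarith

theorem dMinus_le_sub (hW : ∀ x ∈ W, (t : ℝ) < x) : dMinus t W c j ≤ c - t := by
  unfold dMinus
  split_ifs with h
  · have := hW _ (W.sort_getD_mem 0 (i := rank W c - j - 1)
      (by have := @rank_le_finset_card W c; omega))
    linarith
  · rfl

theorem sub_dMinus_le (hta : (t : ℝ) ≤ a) (hj : #{z ∈ W | a ≤ z ∧ z < c} ≤ j) :
    c - dMinus t W c j ≤ a := by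
  unfold dMinus
  split_ifs with h
  · have hsplit : rank W c ≤ #{z ∈ W | z < a} + #{z ∈ W | a ≤ z ∧ z < c} := by
      refine (card_le_card fun z hz => ?_).trans (card_union_le _ _)
      simp only [mem_filter, mem_union] at hz ⊢
      by_cases hza : z < a
      · exact Or.inl ⟨hz.1, hza⟩
      · exact Or.inr ⟨hz.1, not_lt.1 hza, hz.2⟩
    have := (W.sort_getD_lt_iff 0 (i := rank W c - j - 1) (L := a)
      (by have := @rank_le_finset_card W c; omega)).2 (by omega)
    linarith
  · linarith

theorem le_sort_getD_of_rank_le {i : ℕ} (hcW : c ∉ W) (hi : i < #W) (hρ : rank W c ≤ i) :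
    c < W.sort.getD i 0 := by
  have hle := not_lt.1 (mt (W.sort_getD_lt_iff 0 hi (L := c)).1 (by unfold rank at hρ; omega))
  exact hle.lt_of_ne fun h => hcW (h ▸ W.sort_getD_mem 0 hi)

theorem dPlus_nonneg (hcW : c ∉ W) (hct : c ≤ (t : ℝ) + 1) : 0 ≤ dPlus t #W W c r := by
  unfold dPlus
  split_ifs with h
  · linarith [le_sort_getD_of_rank_le hcW h (Nat.le_add_right _ r)]
  · linarith

theorem dPlus_le_sub (hW : ∀ x ∈ W, x < (t : ℝ) + 1) : dPlus t #W W c r ≤ t + 1 - c := by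
  unfold dPlus
  split_ifs with h
  · linarith [hW _ (W.sort_getD_mem 0 h)]
  · rfl

theorem le_add_dPlus (hcW : c ∉ W) (hbt : b ≤ (t : ℝ) + 1)
    (hr : #{z ∈ W | c < z ∧ z ≤ b} ≤ r) :
    b ≤ c + dPlus t #W W c r := by
  unfold dPlus
  split_ifs with h
  · have hsplit : #{z ∈ W | z ≤ b} ≤ rank W c + #{z ∈ W | c < z ∧ z ≤ b} := by
      refine (card_le_card fun z hz => ?_).trans (card_union_le _ _)
      simp only [mem_filter, mem_union] at hz ⊢
      rcases lt_trichotomy z c with hzc | rfl | hzc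
      · exact Or.inl ⟨hz.1, hzc⟩
      · exact absurd hz.1 hcW
      · exact Or.inr ⟨hz.1, hzc, hz.2⟩
    have := not_le.1 (mt (W.sort_getD_le_iff 0 h (U := b)).1 (by omega))
    linarith
  · linarith

theorem two_mul_dMinus_mul_dPlus_mem_Icc (hW : ∀ x ∈ W, x ∈ Set.Ioo (t : ℝ) (t + 1))
    (hcW : c ∉ W) (htc : (t : ℝ) ≤ c) (hct : c ≤ (t : ℝ) + 1) :
    2 * dMinus t W c j * dPlus t #W W c r ∈ Set.Icc 0 (1 / 2) := by
  have hm0 := dMinus_nonneg (W := W) (j := j) htc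
  have hp0 := dPlus_nonneg (r := r) hcW hct
  have hm := dMinus_le_sub (c := c) (j := j) fun x hx => (hW x hx).1
  have hp := dPlus_le_sub (c := c) (r := r) fun x hx => (hW x hx).2
  have := mul_le_mul hm hp hp0 (by linarith)
  exact ⟨by positivity, by nlinarith [sq_nonneg (2 * (c - t) - 1)]⟩

end Distances

theorem lt_iff_lt_of_abs_sub_le_abs_sub {w m c : ℝ} (h : |w - m| ≤ |c - m|) (hwc : w ≠ c) :
    w < c ↔ m < c := by
  rcases lt_or_ge m c with hmc | hcm
  · rw [abs_of_pos (sub_pos.2 hmc)] at h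
    exact iff_of_true ((show w ≤ c by linarith [le_abs_self (w - m)]).lt_of_ne hwc) hmc
  · rw [abs_of_nonpos (sub_nonpos.2 hcm)] at h
    exact iff_of_false (not_lt.2 (by linarith [neg_abs_le (w - m)])) (not_lt.2 hcm)

theorem two_mul_sub_le_of_abs_sub_le_abs_sub {w m c : ℝ} (h : |w - m| ≤ |c - m|)
    (hmc : m ≤ c) : 2 * m - c ≤ w := by
  rw [abs_of_nonneg (sub_nonneg.2 hmc)] at h
  linarith [neg_abs_le (w - m)]

theorem le_two_mul_sub_of_abs_sub_le_abs_sub {w m c : ℝ} (h : |w - m| ≤ |c - m|)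
    (hcm : c ≤ m) : w ≤ 2 * m - c := by
  rw [abs_of_nonpos (sub_nonpos.2 hcm)] at h
  linarith [le_abs_self (w - m)]

theorem Nat.lt_add_card_filter_Icc_iff {P : ℕ → Prop} [DecidablePred P] (hP : Antitone P)
    {lo hi ξ : ℕ} (hξ : ξ ∈ Icc lo hi) : P ξ ↔ ξ < lo + #{x ∈ Icc lo hi | P x} := by
  obtain ⟨hlo, hhi⟩ := mem_Icc.1 hξ
  constructor
  · intro h
    have : Icc lo ξ ⊆ {x ∈ Icc lo hi | P x} := fun x hx =>
      mem_filter.2 ⟨Icc_subset_Icc_right hhi hx, hP (mem_Icc.1 hx).2 h⟩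
    have := card_le_card this
    rw [Nat.card_Icc] at this
    omega
  · intro h
    by_contra hn
    have : {x ∈ Icc lo hi | P x} ⊆ Ico lo ξ := fun x hx => by
      obtain ⟨hx, hPx⟩ := mem_filter.1 hx
      exact mem_Ico.2 ⟨(mem_Icc.1 hx).1, not_le.1 fun hξx => hn (hP hξx hPx)⟩
    have := card_le_card this
    rw [Nat.card_Ico] at this
    omega

theorem two_mul_mul_mul_sq_le {x y X Y a b K B : ℝ} (hx : 0 ≤ x) (hy : 0 ≤ y) (ha : 0 < a)
    (hb : 0 < b) (hxX : x ≤ a * X) (hyY : y ≤ b * Y) (hK : 0 ≤ K) (hB : (X + Y) * K ≤ B) :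
    2 * x * y * K ^ 2 ≤ a * b / 2 * B ^ 2 := by
  have hX : 0 ≤ X := nonneg_of_mul_nonneg_right (hx.trans hxX) ha
  have hY : 0 ≤ Y := nonneg_of_mul_nonneg_right (hy.trans hyY) hb
  calc 2 * x * y * K ^ 2 ≤ 2 * (a * X) * (b * Y) * K ^ 2 := by gcongr
    _ = a * b / 2 * (4 * X * Y) * K ^ 2 := by ring
    _ ≤ a * b / 2 * (X + Y) ^ 2 * K ^ 2 := by gcongr; exact four_mul_le_sq_add X Y
    _ = a * b / 2 * ((X + Y) * K) ^ 2 := by ring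
    _ ≤ a * b / 2 * B ^ 2 := by gcongr

theorem mul_le_div_sub_one_div_four_mul {p D : ℝ} {k kt ℓ : ℕ} (hk : 1 ≤ k)
    (hkt : kt = ⌊p * k⌋₊) (hℓ : 1 ≤ ℓ) (hD : D ∈ Set.Icc 0 (1 / 2))
    (hD' : 2 * ℓ ≤ kt + 1 → D * (2 * ((kt : ℝ) + 2)) ^ 2 ≤ 8 * (ℓ : ℝ) ^ 2 + 1) :
    p * D ≤ ℓ / k - 1 / (4 * k) := by
  obtain ⟨hD0, hD⟩ := hD
  have hk0 : (0 : ℝ) < k := by exact_mod_cast hk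
  have hpk : p * k < kt + 1 := hkt ▸ Nat.lt_floor_add_one _
  have hℓ1 : (1 : ℝ) ≤ ℓ := by exact_mod_cast hℓ
  rw [show (ℓ : ℝ) / k - 1 / (4 * k) = (4 * ℓ - 1) / (4 * k) by field_simp,
    le_div_iff₀ (by positivity)]
  have hpkD : p * D * (4 * k) ≤ 4 * (kt + 1) * D := by nlinarith
  rcases le_or_gt (2 * ℓ) (kt + 1) with h | h
  · have hK : 2 * (ℓ : ℝ) + 1 ≤ kt + 2 := by exact_mod_cast Nat.succ_le_succ h
    have hpoly : ((kt : ℝ) + 1) * (8 * ℓ ^ 2 + 1) ≤ (4 * ℓ - 1) * (kt + 2) ^ 2 := by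
      nlinarith [mul_nonneg (sub_nonneg.2 hK) (sub_nonneg.2 hK)]
    nlinarith [hD' h]
  · have : (kt : ℝ) + 2 ≤ 2 * ℓ := by exact_mod_cast h
    nlinarith

section MarkedPoints

variable {t kt : ℕ}

theorem markedPoint_sub_mul (ξ : ℕ) :
    (markedPoint t kt ξ - t) * (2 * ((kt : ℝ) + 2)) = 2 * ξ - 1 := by
  unfold markedPoint
  field_simp
  ring

theorem markedPoint_strictMono : StrictMono (markedPoint t kt) := fun a b hab => by
  have hK : (0 : ℝ) < 2 * ((kt : ℝ) + 2) := by positivity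
  have hab' : (a : ℝ) < b := by exact_mod_cast hab
  have := markedPoint_sub_mul (t := t) (kt := kt) a
  have := markedPoint_sub_mul (t := t) (kt := kt) b
  nlinarith

end MarkedPoints

section Measure

variable {W : Finset ℝ} {t : ℕ} {c : ℝ} {j r : ℕ}

theorem approvalEvent_inter_square_subset (hcW : c ∉ W) :
    approvalEvent W c j r ∩ Set.Icc (t : ℝ) (t + 1) ×ˢ Set.Icc (t : ℝ) (t + 1) ⊆
      Set.Icc (c - dMinus t W c j) c ×ˢ Set.Icc c (c + dPlus t #W W c r) ∪
        Set.Icc c (c + dPlus t #W W c r) ×ˢ Set.Icc (c - dMinus t W c j) c := by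
  rintro ⟨x, y⟩ ⟨⟨⟨hmin, hmax⟩, hleft, hright⟩, ⟨hx1, hx2⟩, hy1, hy2⟩
  have hlo : c - dMinus t W c j ≤ min x y :=
    sub_dMinus_le (le_min hx1 hy1) <| (card_le_card <| monotone_filter_right _
      fun _ _ hz => ⟨hz.2, hz.1, hz.2.le.trans hmax⟩).trans hleft
  have hhi : max x y ≤ c + dPlus t #W W c r :=
    le_add_dPlus hcW (max_le hx2 hy2) <| (card_le_card <| monotone_filter_right _
      fun _ _ hz => ⟨hz.1, hmin.trans hz.1.le, hz.2⟩).trans hright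
  rcases le_total x y with hxy | hxy
  · rw [min_eq_left hxy, max_eq_right hxy] at *
    exact Or.inl ⟨⟨hlo, hmin⟩, hmax, hhi⟩
  · rw [min_eq_right hxy, max_eq_left hxy] at *
    exact Or.inr ⟨⟨hmax, hhi⟩, hlo, hmin⟩

theorem volume_approvalEvent_inter_square_le (hcW : c ∉ W) (htc : (t : ℝ) ≤ c)
    (hct : c ≤ (t : ℝ) + 1) :
    volume (approvalEvent W c j r ∩ Set.Icc (t : ℝ) (t + 1) ×ˢ Set.Icc (t : ℝ) (t + 1)) ≤
      ENNReal.ofReal (2 * dMinus t W c j * dPlus t #W W c r) := by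
  have hm := dMinus_nonneg (W := W) (j := j) htc
  have hp := dPlus_nonneg (r := r) hcW hct
  refine (measure_mono (approvalEvent_inter_square_subset hcW)).trans <|
    (measure_union_le _ _).trans (le_of_eq ?_)
  rw [Measure.volume_eq_prod, Measure.prod_prod, Measure.prod_prod, Real.volume_Icc,
    Real.volume_Icc, sub_sub_cancel, add_sub_cancel_left, ← ENNReal.ofReal_mul hm,
    ← ENNReal.ofReal_mul hp, ← ENNReal.ofReal_add (by positivity) (by positivity)]
  ring_nf

end Measure

theorem rivMeasure_apply_of_subset {σ : ℕ} {p : ℕ → ℝ} {t : ℕ} (ht : t ∈ Icc 1 σ)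
    {c : ℝ} (hc : c ∈ Set.Ioo (t : ℝ) (t + 1)) {S : Set (ℝ × ℝ)}
    (hS : ∀ xy ∈ S, min xy.1 xy.2 ≤ c ∧ c ≤ max xy.1 xy.2) :
    rivMeasure σ p S =
      ENNReal.ofReal (p t) * volume (S ∩ Set.Icc (t : ℝ) (t + 1) ×ˢ Set.Icc (t : ℝ) (t + 1)) := by
  have hterm : ∀ s : ℕ, (ENNReal.ofReal (p s) •
      ((volume.restrict (Set.Icc (s : ℝ) (s + 1))).prod
        (volume.restrict (Set.Icc (s : ℝ) (s + 1))))) S =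
      ENNReal.ofReal (p s) *
        volume (S ∩ Set.Icc (s : ℝ) (s + 1) ×ˢ Set.Icc (s : ℝ) (s + 1)) := by
    intro s
    rw [Measure.smul_apply, Measure.prod_restrict, ← Measure.volume_eq_prod,
      Measure.restrict_apply' (measurableSet_Icc.prod measurableSet_Icc), smul_eq_mul]
  rw [rivMeasure, Measure.finsetSum_apply, sum_eq_single_of_mem t ht, hterm]
  intro s _ hst
  rw [hterm, Set.eq_empty_of_forall_notMem (s := S ∩ _), measure_empty, mul_zero]
  rintro ⟨x, y⟩ ⟨hxy, ⟨hx1, hx2⟩, hy1, hy2⟩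
  obtain ⟨hmin, hmax⟩ := hS _ hxy
  rcases hst.lt_or_gt with hlt | hgt
  · have : (s : ℝ) + 1 ≤ t := by exact_mod_cast hlt
    linarith [hc.1, max_le hx2 hy2]
  · have : (t : ℝ) + 1 ≤ s := by exact_mod_cast hgt
    linarith [hc.2, le_min hx1 hy1]

namespace IsGreedyCommittee

variable {t kt : ℕ} {Ct W : Finset ℝ} {w : ℕ → ℝ} {c : ℝ} {ξ a b j r : ℕ}

theorem injOn (hw : IsGreedyCommittee t kt Ct w) : Set.InjOn w (Icc 2 (kt + 1)) := by
  have key : ∀ a ∈ Icc 2 (kt + 1), ∀ b ∈ Icc 2 (kt + 1), a < b → w a ≠ w b := by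
    intro a ha b hb hab he
    exact (hw b hb).2.1 (mem_image.2 ⟨a, mem_Icc.2 ⟨(mem_Icc.1 ha).1, by omega⟩, he⟩)
  intro a ha b hb he
  rcases lt_trichotomy a b with h | h | h
  · exact absurd he (key a ha b hb h)
  · exact h
  · exact absurd he.symm (key b hb a ha h)

theorem card_image_Icc (hw : IsGreedyCommittee t kt Ct w) (ha : 2 ≤ a) (hb : b ≤ kt + 1) :
    #((Icc a b).image w) = b + 1 - a := by
  rw [card_image_of_injOn (hw.injOn.mono (coe_subset.2 (Icc_subset_Icc ha hb))), Nat.card_Icc]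

theorem card_eq (hw : IsGreedyCommittee t kt Ct w) (hW : W = (Icc 2 (kt + 1)).image w) :
    #W = kt := by
  rw [hW, hw.card_image_Icc le_rfl le_rfl]
  omega

theorem abs_sub_markedPoint_le (hw : IsGreedyCommittee t kt Ct w) (hcCt : c ∈ Ct)
    (hcW : c ∉ (Icc 2 (kt + 1)).image w) {ξ : ℕ} (hξ : ξ ∈ Icc 2 (kt + 1)) :
    |w ξ - markedPoint t kt ξ| ≤ |c - markedPoint t kt ξ| :=
  (hw ξ hξ).2.2 c hcCt fun h => hcW (image_subset_image (Icc_subset_Icc le_rfl (by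
    have := (mem_Icc.1 hξ).2; omega)) h)

theorem lt_iff_markedPoint_lt (hw : IsGreedyCommittee t kt Ct w) (hcCt : c ∈ Ct)
    (hcW : c ∉ (Icc 2 (kt + 1)).image w) (hξ : ξ ∈ Icc 2 (kt + 1)) :
    w ξ < c ↔ markedPoint t kt ξ < c :=
  lt_iff_lt_of_abs_sub_le_abs_sub (hw.abs_sub_markedPoint_le hcCt hcW hξ)
    fun h => hcW (h ▸ mem_image_of_mem w hξ)

theorem markedPoint_lt_iff (hw : IsGreedyCommittee t kt Ct w) (hW : W = (Icc 2 (kt + 1)).image w)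
    (hcCt : c ∈ Ct) (hcW : c ∉ W) (hξ : ξ ∈ Icc 2 (kt + 1)) :
    markedPoint t kt ξ < c ↔ ξ < 2 + rank W c := by
  subst hW
  have hrank : rank ((Icc 2 (kt + 1)).image w) c =
      #{ξ ∈ Icc 2 (kt + 1) | markedPoint t kt ξ < c} := by
    rw [rank, filter_image, card_image_of_injOn (hw.injOn.mono (coe_subset.2 (filter_subset _ _)))]
    exact congrArg card (filter_congr fun ξ hξ => hw.lt_iff_markedPoint_lt hcCt hcW hξ)
  rw [hrank]
  exact Nat.lt_add_card_filter_Icc_iff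
    (fun _ _ hab h => (markedPoint_strictMono.monotone hab).trans_lt h) hξ

theorem dMinus_le (hw : IsGreedyCommittee t kt Ct w) (hW : W = (Icc 2 (kt + 1)).image w)
    (hcCt : c ∈ Ct) (hcW : c ∉ W) (ha : 2 ≤ a) (haj : a + j = rank W c + 1) :
    dMinus t W c j ≤ 2 * (c - markedPoint t kt a) := by
  have hρ : rank W c ≤ kt := hw.card_eq hW ▸ rank_le_finset_card
  have hI : ∀ ξ ∈ Icc a (a + j), ξ ∈ Icc 2 (kt + 1) ∧ markedPoint t kt ξ < c := fun ξ hξ => by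
    have hξI : ξ ∈ Icc 2 (kt + 1) := mem_Icc.2 ⟨ha.trans (mem_Icc.1 hξ).1, by grind⟩
    exact ⟨hξI, (hw.markedPoint_lt_iff hW hcCt hcW hξI).2 (by grind)⟩
  set L := 2 * markedPoint t kt a - c
  have hLc : L < c := by linarith [(hI a (left_mem_Icc.2 (by omega))).2]
  set T := (Icc a (a + j)).image w
  have hTW : T ⊆ {x ∈ W | x < c} := by
    rintro _ hx
    obtain ⟨ξ, hξ, rfl⟩ := mem_image.1 hx
    obtain ⟨hξI, hm⟩ := hI ξ hξ
    exact mem_filter.2 ⟨hW ▸ mem_image_of_mem w hξI,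
      (hw.lt_iff_markedPoint_lt hcCt (hW ▸ hcW) hξI).2 hm⟩
  have hTL : Disjoint {x ∈ W | x < L} T := by
    refine disjoint_right.2 fun x hx hxL => ?_
    obtain ⟨ξ, hξ, rfl⟩ := mem_image.1 hx
    obtain ⟨hξI, hm⟩ := hI ξ hξ
    have := two_mul_sub_le_of_abs_sub_le_abs_sub
      (hw.abs_sub_markedPoint_le hcCt (hW ▸ hcW) hξI) hm.le
    have := (markedPoint_strictMono (t := t) (kt := kt)).monotone (mem_Icc.1 hξ).1
    linarith [(mem_filter.1 hxL).2]
  have hT : #T = j + 1 := by rw [hw.card_image_Icc ha (by omega)]; omega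
  have hcount : #{x ∈ W | x < L} + (j + 1) ≤ rank W c := calc
    _ = #({x ∈ W | x < L} ∪ T) := by rw [card_union_of_disjoint hTL, hT]
    _ ≤ rank W c :=
      card_le_card (union_subset (monotone_filter_right _ fun _ _ hx => hx.trans hLc) hTW)
  unfold dMinus
  rw [if_pos (by omega)]
  have := not_lt.1 (mt (W.sort_getD_lt_iff 0 (i := rank W c - j - 1) (L := L)
    (by have := @rank_le_finset_card W c; omega)).1 (by omega))
  linarith

theorem dPlus_le (hw : IsGreedyCommittee t kt Ct w) (hW : W = (Icc 2 (kt + 1)).image w)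
    (hcCt : c ∈ Ct) (hcW : c ∉ W) (hr : rank W c + r + 2 ≤ kt + 1) :
    dPlus t kt W c r ≤ 2 * (markedPoint t kt (rank W c + r + 2) - c) := by
  set b := rank W c + r + 2
  have hI : ∀ ξ ∈ Icc (rank W c + 2) b, ξ ∈ Icc 2 (kt + 1) ∧ c ≤ markedPoint t kt ξ :=
    fun ξ hξ => by
      have hξI : ξ ∈ Icc 2 (kt + 1) := mem_Icc.2 ⟨by grind, (mem_Icc.1 hξ).2.trans hr⟩
      exact ⟨hξI, not_lt.1 fun h => by grind [hw.markedPoint_lt_iff hW hcCt hcW hξI]⟩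
  set U := 2 * markedPoint t kt b - c
  have hcU : c ≤ U := by linarith [(hI b (right_mem_Icc.2 (by omega))).2]
  set T := (Icc (rank W c + 2) b).image w
  have hTU : T ⊆ {x ∈ W | x ≤ U} := by
    rintro _ hx
    obtain ⟨ξ, hξ, rfl⟩ := mem_image.1 hx
    obtain ⟨hξI, hm⟩ := hI ξ hξ
    have := le_two_mul_sub_of_abs_sub_le_abs_sub
      (hw.abs_sub_markedPoint_le hcCt (hW ▸ hcW) hξI) hm
    have := (markedPoint_strictMono (t := t) (kt := kt)).monotone (mem_Icc.1 hξ).2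
    exact mem_filter.2 ⟨hW ▸ mem_image_of_mem w hξI, by linarith⟩
  have hTc : Disjoint {x ∈ W | x < c} T := by
    refine disjoint_right.2 fun x hx hxc => ?_
    obtain ⟨ξ, hξ, rfl⟩ := mem_image.1 hx
    obtain ⟨hξI, hm⟩ := hI ξ hξ
    exact not_lt.2 hm ((hw.lt_iff_markedPoint_lt hcCt (hW ▸ hcW) hξI).1 (mem_filter.1 hxc).2)
  have hT : #T = r + 1 := by rw [hw.card_image_Icc (by omega) hr]; omega
  have hcount : rank W c + r + 1 ≤ #{x ∈ W | x ≤ U} := calc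
    _ = #({x ∈ W | x < c} ∪ T) := by rw [card_union_of_disjoint hTc, hT, rank, add_assoc]
    _ ≤ _ := card_le_card (union_subset (monotone_filter_right _ fun _ _ hx => hx.le.trans hcU) hTU)
  have hWkt : #W = kt := hw.card_eq hW
  unfold dPlus
  rw [if_pos (by omega)]
  have := (W.sort_getD_le_iff 0 (i := rank W c + r) (U := U) (by omega)).2 (by omega)
  linarith

theorem two_mul_dMinus_mul_dPlus_mul_sq_le_of_rank_le (hw : IsGreedyCommittee t kt Ct w)
    (hW : W = (Icc 2 (kt + 1)).image w) (hCt : ∀ x ∈ Ct, x ∈ Set.Ioo (t : ℝ) (t + 1))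
    (hcCt : c ∈ Ct) (hcW : c ∉ W) (hℓ : 2 * (j + r + 1) ≤ kt + 1) (hρj : rank W c ≤ j) :
    2 * dMinus t W c j * dPlus t kt W c r * (2 * ((kt : ℝ) + 2)) ^ 2 ≤
      (2 * ((j : ℝ) + r + 1) + 1) ^ 2 := by
  obtain ⟨htc, hct⟩ := hCt c hcCt
  have hdp : 0 ≤ dPlus t kt W c r := hw.card_eq hW ▸ dPlus_nonneg hcW hct.le
  have hdm_le : dMinus t W c j ≤ 1 * (c - t) := by
    unfold dMinus; rw [if_neg (by omega), one_mul]
  have hdp_le := hw.dPlus_le hW hcCt hcW (r := r) (by omega)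
  have hsum : (c - t + (markedPoint t kt (rank W c + r + 2) - c)) * (2 * ((kt : ℝ) + 2)) ≤
      2 * (j + r + 1) + 1 := by
    have hb := markedPoint_sub_mul (t := t) (kt := kt) (rank W c + r + 2)
    have hρj' : (rank W c : ℝ) ≤ j := by exact_mod_cast hρj
    push_cast at hb
    linear_combination hb + 2 * hρj'
  linarith [two_mul_mul_mul_sq_le (dMinus_nonneg htc.le) hdp one_pos two_pos hdm_le hdp_le
    (by positivity) hsum]

theorem two_mul_dMinus_mul_dPlus_mul_sq_le_of_lt_rank (hw : IsGreedyCommittee t kt Ct w)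
    (hW : W = (Icc 2 (kt + 1)).image w) (hCt : ∀ x ∈ Ct, x ∈ Set.Ioo (t : ℝ) (t + 1))
    (hcCt : c ∈ Ct) (hcW : c ∉ W) (hρj : j < rank W c) :
    2 * dMinus t W c j * dPlus t kt W c r * (2 * ((kt : ℝ) + 2)) ^ 2 ≤
      8 * ((j : ℝ) + r + 1) ^ 2 + 1 := by
  obtain ⟨htc, hct⟩ := hCt c hcCt
  have hdm := dMinus_nonneg (W := W) (j := j) htc.le
  have hdp : 0 ≤ dPlus t kt W c r := hw.card_eq hW ▸ dPlus_nonneg hcW hct.le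
  have hm := markedPoint_sub_mul (t := t) (kt := kt)
  set ρ := rank W c
  obtain ⟨a, ha, haj⟩ : ∃ a, 2 ≤ a ∧ a + j = ρ + 1 := ⟨ρ + 1 - j, by omega, by omega⟩
  have hdm_le := hw.dMinus_le hW hcCt hcW ha haj
  have haj' : (a : ℝ) + j = ρ + 1 := by exact_mod_cast haj
  rcases lt_or_ge (ρ + r) kt with hρr | hρr
  · have hdp_le := hw.dPlus_le hW hcCt hcW (r := r) (by omega)
    have hsum : (c - markedPoint t kt a + (markedPoint t kt (ρ + r + 2) - c)) *
        (2 * ((kt : ℝ) + 2)) ≤ 2 * (j + r + 1) := by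
      have hb := hm (ρ + r + 2)
      push_cast at hb
      linear_combination hb - hm a - 2 * haj'
    nlinarith [two_mul_mul_mul_sq_le hdm hdp two_pos two_pos hdm_le hdp_le (by positivity) hsum]
  · have hdp_le : dPlus t kt W c r ≤ 1 * (t + 1 - c) := by
      unfold dPlus; rw [if_neg (by omega), one_mul]
    have hsum : (c - markedPoint t kt a + (t + 1 - c)) * (2 * ((kt : ℝ) + 2)) ≤
        2 * (j + r + 1) + 1 := by
      have hρr' : (kt : ℝ) ≤ ρ + r := by exact_mod_cast hρr
      linear_combination -2 * haj' - hm a + 2 * hρr'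
    nlinarith [two_mul_mul_mul_sq_le hdm hdp two_pos one_pos hdm_le hdp_le (by positivity) hsum]

theorem two_mul_dMinus_mul_dPlus_mul_sq_le (hw : IsGreedyCommittee t kt Ct w)
    (hW : W = (Icc 2 (kt + 1)).image w) (hCt : ∀ x ∈ Ct, x ∈ Set.Ioo (t : ℝ) (t + 1))
    (hcCt : c ∈ Ct) (hcW : c ∉ W) (hℓ : 2 * (j + r + 1) ≤ kt + 1) :
    2 * dMinus t W c j * dPlus t kt W c r * (2 * ((kt : ℝ) + 2)) ^ 2 ≤
      8 * ((j + r + 1 : ℕ) : ℝ) ^ 2 + 1 := by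
  push_cast
  rcases le_or_gt (rank W c) j with hρj | hρj
  · have := hw.two_mul_dMinus_mul_dPlus_mul_sq_le_of_rank_le hW hCt hcCt hcW hℓ hρj
    nlinarith [(by positivity : (0 : ℝ) ≤ j + r)]
  · exact hw.two_mul_dMinus_mul_dPlus_mul_sq_le_of_lt_rank hW hCt hcCt hcW hρj

end IsGreedyCommittee

theorem riv_pi_bound_general
    (σ : ℕ) (p : ℕ → ℝ)
    (hp0 : ∀ t ∈ Finset.Icc 1 σ, 0 ≤ p t)
    (t : ℕ) (ht : t ∈ Finset.Icc 1 σ)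
    (Ct : Finset ℝ) (hCt : ∀ x ∈ Ct, x ∈ Set.Ioo (t : ℝ) (t + 1))
    (k : ℕ) (hk : 1 ≤ k)
    (kt : ℕ) (hktdef : kt = ⌊p t * (k : ℝ)⌋₊)
    (w : ℕ → ℝ) (hw : IsGreedyCommittee t kt Ct w)
    (W : Finset ℝ) (hW : W = (Finset.Icc 2 (kt + 1)).image w)
    (c : ℝ) (hcCt : c ∈ Ct) (hcW : c ∉ W)
    (ℓ j : ℕ) (hℓ1 : 1 ≤ ℓ) (hj : j ≤ ℓ - 1) :
    rivMeasure σ p (approvalEvent W c j (ℓ - 1 - j)) ≤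
      ENNReal.ofReal ((ℓ : ℝ) / k - 1 / (4 * k)) := by
  obtain ⟨htc, hct⟩ := hCt c hcCt
  obtain ⟨r, rfl⟩ : ∃ r, ℓ = j + r + 1 := ⟨ℓ - 1 - j, by omega⟩
  rw [show j + r + 1 - 1 - j = r by omega]
  have hWkt : #W = kt := hw.card_eq hW
  have hWseg : ∀ x ∈ W, x ∈ Set.Ioo (t : ℝ) (t + 1) := by
    rw [hW]
    rintro _ hx
    obtain ⟨ξ, hξ, rfl⟩ := mem_image.1 hx
    exact hCt _ (hw ξ hξ).1
  have hvol := volume_approvalEvent_inter_square_le (j := j) (r := r) hcW htc.le hct.le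
  have hhalf := two_mul_dMinus_mul_dPlus_mem_Icc (j := j) (r := r) hWseg hcW htc.le hct.le
  rw [hWkt] at hvol hhalf
  calc rivMeasure σ p (approvalEvent W c j r)
      = ENNReal.ofReal (p t) * volume (approvalEvent W c j r ∩
          Set.Icc (t : ℝ) (t + 1) ×ˢ Set.Icc (t : ℝ) (t + 1)) :=
        rivMeasure_apply_of_subset ht ⟨htc, hct⟩ fun _ h => h.1
    _ ≤ ENNReal.ofReal (p t) * ENNReal.ofReal (2 * dMinus t W c j * dPlus t kt W c r) := by
        gcongr
    _ = ENNReal.ofReal (p t * (2 * dMinus t W c j * dPlus t kt W c r)) :=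
        (ENNReal.ofReal_mul (hp0 t ht)).symm
    _ ≤ _ := ENNReal.ofReal_le_ofReal <| mul_le_div_sub_one_div_four_mul hk hktdef
        (by omega) hhalf
        (hw.two_mul_dMinus_mul_dPlus_mul_sq_le hW hCt hcCt hcW)

/-- For `k_t = ⌊p_t k⌋` and every candidate `c ∈ C_t ∖ Ŵ_t`, integers `1 ≤ ℓ ≤ k`
and `0 ≤ j ≤ ℓ−1`, the probability `π(ℓ, c, j)` (that a random voter approves `c`, at
most `j` elements of `Ŵ_t` strictly to the left of `c`, and at most `ℓ−1−j` elements
strictly to the right of `c`) is at most `ℓ/k − 1/(4k)`. -/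
theorem riv_pi_bound
    (σ : ℕ) (p : ℕ → ℝ)
    (hp0 : ∀ t ∈ Finset.Icc 1 σ, 0 ≤ p t)
    (hpsum : ∑ t ∈ Finset.Icc 1 σ, p t = 1)
    (t : ℕ) (ht : t ∈ Finset.Icc 1 σ)
    (Ct : Finset ℝ) (hCt : ∀ x ∈ Ct, x ∈ Set.Ioo (t : ℝ) (t + 1))
    (k : ℕ) (hk : 1 ≤ k)
    (kt : ℕ) (hktdef : kt = ⌊p t * (k : ℝ)⌋₊) (hkt : kt ≤ Ct.card)
    (w : ℕ → ℝ) (hw : IsGreedyCommittee t kt Ct w)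
    (W : Finset ℝ) (hW : W = (Finset.Icc 2 (kt + 1)).image w)
    (c : ℝ) (hcCt : c ∈ Ct) (hcW : c ∉ W)
    (ℓ j : ℕ) (hℓ1 : 1 ≤ ℓ) (hℓk : ℓ ≤ k) (hj : j ≤ ℓ - 1) :
    rivMeasure σ p (approvalEvent W c j (ℓ - 1 - j)) ≤
      ENNReal.ofReal ((ℓ : ℝ) / k - 1 / (4 * k)) :=
  riv_pi_bound_general σ p hp0 t ht Ct hCt k hk kt hktdef w hw W hW c hcCt hcW ℓ j hℓ1 hj
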